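/- Let n be the Lie algebra with dual basis f^1,...,f^7 and structure equations df^5 = f^{27}+f^{12}, df^6 = f^{37}+f^{13}, df^i=0 for i∈{1,2,3,4,7}. Then the coframe (e^1,...,e^7) = (f^2−f^6, f^1, −f^4, f^5, √3 f^3, −√3 f^6, √3 f^7) yields closed forms α and β of the standard SO(4)-type, i.e. dα = 0 = dβ. -/

import Mathlib

/-! `F i` is the paper's `f^{i+1}`. Written in this basis, `α` is `√3` times, and `β` is `3`
times, a signed sum of basis monomials. Only `F 4` and `F 5` have nonzero differential, so
after the Leibniz rule the monomials of `dα` and `dβ` either contain a repeated generator or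
cancel in pairs. -/

noncomputable section

def F (i : Fin 7) : ExteriorAlgebra ℝ (Fin 7 → ℝ) :=
  ExteriorAlgebra.ι ℝ (Pi.single i 1)

/-- The coframe (e^1,…,e^7) = (f^2−f^6, f^1, −f^4, f^5, √3 f^3, −√3 f^6, √3 f^7). -/
def e : Fin 7 → ExteriorAlgebra ℝ (Fin 7 → ℝ) :=
  ![F 1 - F 5, F 0, -F 3, F 4, Real.sqrt 3 • F 2, -(Real.sqrt 3 • F 5), Real.sqrt 3 • F 6]

def α : ExteriorAlgebra ℝ (Fin 7 → ℝ) :=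
  (e 0 * e 1 - e 2 * e 3) * e 4 + (e 0 * e 2 - e 3 * e 1) * e 5
    + (e 0 * e 3 - e 1 * e 2) * e 6 - (3:ℝ) • (e 4 * e 5 * e 6)

def β : ExteriorAlgebra ℝ (Fin 7 → ℝ) :=
  -((e 0 * e 1 - e 2 * e 3) * (e 5 * e 6))
    - (e 0 * e 2 - e 3 * e 1) * (e 6 * e 4)
    - (e 0 * e 3 - e 1 * e 2) * (e 4 * e 5)
    - (3:ℝ) • (e 0 * e 1 * e 2 * e 3)

namespace ExteriorAlgebra

variable {R M : Type*} [CommRing R] [AddCommGroup M] [Module R M]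

theorem ι_mul_ι_swap (x y : M) : ι R y * ι R x = -(ι R x * ι R y) :=
  eq_neg_of_add_eq_zero_left (ι_add_mul_swap y x)

theorem ι_mul_ι_mul_swap (x y : M) (a : ExteriorAlgebra R M) :
    ι R y * (ι R x * a) = -(ι R x * (ι R y * a)) := by
  rw [← mul_assoc, ι_mul_ι_swap, neg_mul, mul_assoc]

theorem ι_mul_ι_mul_self (x : M) (a : ExteriorAlgebra R M) : ι R x * (ι R x * a) = 0 := by
  rw [← mul_assoc, ι_sq_zero, zero_mul]

end ExteriorAlgebra

theorem F_mul_self (i : Fin 7) : F i * F i = 0 := ExteriorAlgebra.ι_sq_zero _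

theorem F_mul_F_mul_self (i : Fin 7) (a : ExteriorAlgebra ℝ (Fin 7 → ℝ)) :
    F i * (F i * a) = 0 :=
  ExteriorAlgebra.ι_mul_ι_mul_self _ _

-- With `Fin.reduceLT` discharging the side condition, these sort right-associated monomials.
theorem F_mul_F_of_lt {i j : Fin 7} (_ : i < j) : F j * F i = -(F i * F j) :=
  ExteriorAlgebra.ι_mul_ι_swap _ _

theorem F_mul_F_mul_of_lt {i j : Fin 7} (_ : i < j) (a : ExteriorAlgebra ℝ (Fin 7 → ℝ)) :
    F j * (F i * a) = -(F i * (F j * a)) :=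
  ExteriorAlgebra.ι_mul_ι_mul_swap _ _ _

theorem α_eq : α = Real.sqrt 3 • (-(F 0 * F 1 * F 2) - F 0 * F 2 * F 5 + F 2 * F 3 * F 4
    + F 1 * F 3 * F 5 - F 0 * F 4 * F 5 + F 1 * F 4 * F 6 + F 4 * F 5 * F 6 + F 0 * F 3 * F 6
    + (9 : ℝ) • (F 2 * F 5 * F 6)) := by
  simp only [α, e, Matrix.cons_val, sub_mul, neg_mul, mul_neg, smul_mul_assoc, mul_smul_comm,
    smul_smul, Real.mul_self_sqrt, Nat.ofNat_nonneg, mul_assoc, F_mul_self, F_mul_F_of_lt,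
    F_mul_F_mul_of_lt, Fin.reduceLT, neg_neg, mul_zero, smul_neg, neg_zero]
  module

theorem β_eq : β = (3 : ℝ) • (-(F 0 * F 1 * F 5 * F 6) + F 3 * F 4 * F 5 * F 6
    + F 1 * F 2 * F 3 * F 6 - F 2 * F 3 * F 5 * F 6 - F 0 * F 2 * F 4 * F 6
    - F 1 * F 2 * F 4 * F 5 - F 0 * F 2 * F 3 * F 5 - F 0 * F 1 * F 3 * F 4
    + F 0 * F 3 * F 4 * F 5) := by
  simp only [β, e, Matrix.cons_val, sub_mul, neg_mul, mul_neg, smul_mul_assoc, mul_smul_comm,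
    smul_smul, Real.mul_self_sqrt, Nat.ofNat_nonneg, mul_assoc, F_mul_self, F_mul_F_mul_self,
    F_mul_F_of_lt, F_mul_F_mul_of_lt, Fin.reduceLT, neg_neg, mul_zero, smul_neg, neg_zero]
  module

theorem n2family_harmonic_SO4
    (d : ExteriorAlgebra ℝ (Fin 7 → ℝ) →ₗ[ℝ] ExteriorAlgebra ℝ (Fin 7 → ℝ))
    (h0 : d (F 0) = 0) (h1 : d (F 1) = 0) (h2 : d (F 2) = 0) (h3 : d (F 3) = 0)
    (h4 : d (F 4) = F 1 * F 6 + F 0 * F 1)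
    (h5 : d (F 5) = F 2 * F 6 + F 0 * F 2)
    (h6 : d (F 6) = 0)
    (htriple : ∀ i j k : Fin 7,
      d (F i * F j * F k) = d (F i) * F j * F k - F i * d (F j) * F k + F i * F j * d (F k))
    (hquad : ∀ i j k l : Fin 7,
      d (F i * F j * F k * F l)
        = d (F i) * F j * F k * F l - F i * d (F j) * F k * F l
          + F i * F j * d (F k) * F l - F i * F j * F k * d (F l)) :
    d α = 0 ∧ d β = 0 := by
  constructor
  · rw [α_eq]
    simp only [map_smul, map_add, map_sub, map_neg, htriple, h0, h1, h2, h3, h4, h5, h6]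
    simp only [zero_mul, mul_zero, add_mul, mul_add, neg_mul, mul_neg, mul_assoc, F_mul_self,
      F_mul_F_mul_self, F_mul_F_of_lt, F_mul_F_mul_of_lt, Fin.reduceLT, neg_neg, neg_zero]
    module
  · rw [β_eq]
    simp only [map_smul, map_add, map_sub, map_neg, hquad, h0, h1, h2, h3, h4, h5, h6]
    simp only [zero_mul, mul_zero, add_mul, mul_add, neg_mul, mul_neg, mul_assoc, F_mul_self,
      F_mul_F_mul_self, F_mul_F_of_lt, F_mul_F_mul_of_lt, Fin.reduceLT, neg_neg, neg_zero]
    module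

end
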